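/- arXiv:2108.12034 — 3 statements merged into one kernel-verified Lean document; each statement's English description precedes it below -/
import Mathlib

section
/- Let A, B, C, D ∈ ℝ² be four points in convex position (vertices of a convex quadrilateral, in cyclic order) such that the four points determine at most three distinct angle values in (0,π), and suppose opposite interior angles of the quadrilateral are equal with values γ > β (so the angles in cyclic order are γ, β, γ, β and γ ≠ β). Then the quadrilateral is a rhombus with angles π/3 and 2π/3, i.e., it is two equilateral triangles glued along a common edge. -/
open EuclideanGeometry

noncomputable section

abbrev Pt : Type := EuclideanSpace ℝ (Fin 2)

/-- The point (x, y) in the Euclidean plane. -/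
def pt (x y : ℝ) : Pt := (WithLp.equiv 2 (Fin 2 → ℝ)).symm ![x, y]

/-- The set of distinct angle values in (0, π) determined by a planar point set. -/
def angleSet (P : Set Pt) : Set ℝ :=
  {θ : ℝ | θ ∈ Set.Ioo 0 Real.pi ∧
    ∃ x ∈ P, ∃ y ∈ P, ∃ z ∈ P, x ≠ y ∧ y ≠ z ∧ x ≠ z ∧ ∠ x y z = θ}


/-- A convex quadrilateral with vertices in cyclic order: the open diagonals meet and
no three consecutive vertices are collinear. -/
def ConvexQuad (A B C D : Pt) : Prop :=
  (∃ x, x ∈ openSegment ℝ A C ∧ x ∈ openSegment ℝ B D) ∧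
  ¬ Collinear ℝ ({A, B, C} : Set Pt) ∧ ¬ Collinear ℝ ({B, C, D} : Set Pt) ∧
  ¬ Collinear ℝ ({C, D, A} : Set Pt) ∧ ¬ Collinear ℝ ({D, A, B} : Set Pt)

/-! The diagonal `BD` cuts the angles `β` at `B` and `D` into four positive pieces, each smaller
than `β`. Together with `γ` and `β` the piece `∠ABD` already gives three distinct angle values,
so all four pieces equal `∠ABD = β / 2`. Then `ABD` is isosceles and congruent to `CBD` (ASA),
so `ABCD` is a rhombus. As `β + γ = π`, the diagonal `AC` makes the angle `γ / 2` with the sides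
at `C`, and this new value must be `β`; hence `γ = 2β` and `β = π / 3`. -/

open Real

theorem sbtw_of_mem_openSegment {E : Type*} [AddCommGroup E] [Module ℝ E] {a c x : E}
    (h : x ∈ openSegment ℝ a c) (hac : a ≠ c) : Sbtw ℝ a x c := by
  refine ⟨mem_segment_iff_wbtw.1 (openSegment_subset_segment ℝ a c h), ?_, ?_⟩
  · rintro rfl
    exact hac (left_mem_openSegment_iff.1 h)
  · rintro rfl
    exact hac (right_mem_openSegment_iff.1 h)

namespace EuclideanGeometry

variable {V P : Type*} [NormedAddCommGroup V] [InnerProductSpace ℝ V] [MetricSpace P]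
  [NormedAddTorsor V P]

theorem not_collinear_rotate {a b c : P} (h : ¬Collinear ℝ {a, b, c}) :
    ¬Collinear ℝ {b, c, a} := by
  rwa [Set.insert_comm, Set.pair_comm] at h

theorem angle_add_angle_eq_of_sbtw_of_sbtw {a b c d x : P} (hac : Sbtw ℝ a x c)
    (hbd : Sbtw ℝ b x d) : ∠ a b d + ∠ d b c = ∠ a b c :=
  angle_add_angle_eq_of_sbtw_of_sameRay hac hbd.wbtw.sameRay_vsub_left hbd.left_ne_right.symm

theorem angle_eq_pi_sub_div_two_of_dist_eq {a b c : P} (h : dist b a = dist b c) (hab : a ≠ b) :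
    ∠ b c a = (π - ∠ a b c) / 2 := by
  have hsum := angle_add_angle_add_angle_eq_pi c hab.symm
  rw [angle_comm c a b, angle_eq_angle_of_dist_eq h] at hsum
  linarith

theorem rhombus_of_diagonal_angles_eq {a b c d : P} (h : ¬Collinear ℝ {a, b, d})
    (hb : ∠ a b d = ∠ d b c) (hc : ∠ a b d = ∠ c d b) (hd : ∠ a b d = ∠ b d a) :
    dist a b = dist b c ∧ dist b c = dist c d ∧ dist c d = dist d a := by
  have hcong : Congruent ![a, b, d] ![c, b, d] :=
    angle_side_angle h (hb.trans (angle_comm d b c)) rfl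
      (hd.symm.trans (hc.trans (angle_comm c d b)))
  have hab : dist a b = dist c b := hcong.dist_eq 0 1
  have had : dist d a = dist d c := hcong.dist_eq 2 0
  have hiso : dist a b = dist a d :=
    dist_eq_of_angle_eq_angle_of_angle_ne_pi (hd.trans (angle_comm b d a))
      (angle_lt_pi_of_not_collinear (by rwa [Set.insert_comm] at h)).ne
  refine ⟨hab.trans (dist_comm c b), ?_, ?_⟩ <;>
    linarith [dist_comm a d, dist_comm c d, dist_comm d a, dist_comm d c, dist_comm b c]

end EuclideanGeometry

theorem angle_mem_angleSet {S : Set Pt} {u v w : Pt} (h : ¬Collinear ℝ {u, v, w})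
    (hu : u ∈ S := by simp) (hv : v ∈ S := by simp) (hw : w ∈ S := by simp) :
    ∠ u v w ∈ angleSet S :=
  ⟨⟨angle_pos_of_not_collinear h, angle_lt_pi_of_not_collinear h⟩, u, hu, v, hv, w, hw,
    ne₁₂_of_not_collinear h, ne₂₃_of_not_collinear h, ne₁₃_of_not_collinear h, rfl⟩

theorem angleSet_finite {S : Set Pt} (hS : S.Finite) : (angleSet S).Finite := by
  refine ((hS.prod (hS.prod hS)).image fun t : Pt × Pt × Pt => ∠ t.1 t.2.1 t.2.2).subset ?_
  rintro θ ⟨-, u, hu, v, hv, w, hw, -, -, -, rfl⟩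
  exact ⟨(u, v, w), ⟨hu, hv, hw⟩, rfl⟩

namespace ConvexQuad

variable {A B C D : Pt}

theorem rotate₂ (hq : ConvexQuad A B C D) : ConvexQuad C D A B := by
  obtain ⟨⟨x, hAC, hBD⟩, hABC, hBCD, hCDA, hDAB⟩ := hq
  exact ⟨⟨x, openSegment_symm ℝ A C ▸ hAC, openSegment_symm ℝ B D ▸ hBD⟩, hCDA, hDAB, hABC, hBCD⟩

theorem exists_sbtw (hq : ConvexQuad A B C D) : ∃ x, Sbtw ℝ A x C ∧ Sbtw ℝ B x D := by
  obtain ⟨⟨x, hAC, hBD⟩, hABC, hBCD, -⟩ := hq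
  exact ⟨x, sbtw_of_mem_openSegment hAC (ne₁₃_of_not_collinear hABC),
    sbtw_of_mem_openSegment hBD (ne₁₃_of_not_collinear hBCD)⟩

theorem angle_add_angle_eq (hq : ConvexQuad A B C D) : ∠ A B D + ∠ D B C = ∠ A B C := by
  obtain ⟨x, hAC, hBD⟩ := hq.exists_sbtw
  exact angle_add_angle_eq_of_sbtw_of_sbtw hAC hBD

theorem angle_sum_eq_two_pi (hq : ConvexQuad A B C D) :
    ∠ D A B + ∠ A B C + ∠ B C D + ∠ C D A = 2 * π := by
  have hB := hq.angle_add_angle_eq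
  have hD := hq.rotate₂.angle_add_angle_eq
  have hABD := angle_add_angle_add_angle_eq_pi D (ne₁₂_of_not_collinear hq.2.1).symm
  have hCBD := angle_add_angle_add_angle_eq_pi D (ne₂₃_of_not_collinear hq.2.1)
  linarith [angle_comm D B C, angle_comm C D B, angle_comm D C B]

theorem angleSet_eq_of_ncard_le_three (hq : ConvexQuad A B C D)
    (hlt : ∠ A B C < ∠ D A B) (hcount : (angleSet {A, B, C, D}).ncard ≤ 3) :
    angleSet {A, B, C, D} = {∠ D A B, ∠ A B C, ∠ A B D} := by
  have hsplit := hq.angle_add_angle_eq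
  obtain ⟨-, hABC, hBCD, -, hDAB⟩ := hq
  have hDBC := angle_mem_angleSet (S := {A, B, C, D})
    (not_collinear_rotate (not_collinear_rotate hBCD))
  have hsub : {∠ D A B, ∠ A B C, ∠ A B D} ⊆ angleSet {A, B, C, D} := by
    rintro θ (rfl | rfl | rfl)
    exacts [angle_mem_angleSet hDAB, angle_mem_angleSet hABC,
      angle_mem_angleSet (not_collinear_rotate hDAB)]
  refine (Set.eq_of_subset_of_ncard_le hsub (hcount.trans_eq ?_) (angleSet_finite (by simp))).symm
  refine (Set.ncard_eq_three.2 ⟨_, _, _, hlt.ne', ?_, ?_, rfl⟩).symm <;> linarith [hDBC.1.1]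

theorem diagonal_angles_eq (hq : ConvexQuad A B C D) (hβ : ∠ A B C = ∠ C D A)
    (hlt : ∠ A B C < ∠ D A B) (hS : angleSet {A, B, C, D} = {∠ D A B, ∠ A B C, ∠ A B D}) :
    ∠ D B C = ∠ A B D ∧ ∠ C D B = ∠ A B D ∧ ∠ B D A = ∠ A B D := by
  have hsplitB := hq.angle_add_angle_eq
  have hsplitD := hq.rotate₂.angle_add_angle_eq
  obtain ⟨-, -, hBCD, -, hDAB⟩ := hq
  have hABD := angle_mem_angleSet (S := {A, B, C, D}) (not_collinear_rotate hDAB)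
  have hDBC := angle_mem_angleSet (S := {A, B, C, D})
    (not_collinear_rotate (not_collinear_rotate hBCD))
  have hCDB := angle_mem_angleSet (S := {A, B, C, D}) (not_collinear_rotate hBCD)
  have hBDA := angle_mem_angleSet (S := {A, B, C, D})
    (not_collinear_rotate (not_collinear_rotate hDAB))
  have eq_of_lt : ∀ θ ∈ angleSet {A, B, C, D}, θ < ∠ A B C → θ = ∠ A B D := by
    intro θ hθ hθlt
    rw [hS] at hθ
    rcases hθ with h | h | h
    · linarith
    · exact absurd h hθlt.ne
    · exact h
  exact ⟨eq_of_lt _ hDBC (by linarith [hABD.1.1]), eq_of_lt _ hCDB (by linarith [hBDA.1.1]),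
    eq_of_lt _ hBDA (by linarith [hCDB.1.1])⟩

end ConvexQuad

theorem stmt5 (A B C D : Pt) (γ β : ℝ) (hq : ConvexQuad A B C D)
    (hA : ∠ D A B = γ) (hB : ∠ A B C = β) (hC : ∠ B C D = γ) (hD : ∠ C D A = β)
    (hgb : β < γ)
    (hcount : (angleSet {A, B, C, D}).ncard ≤ 3) :
    dist A B = dist B C ∧ dist B C = dist C D ∧ dist C D = dist D A ∧
    β = Real.pi / 3 ∧ γ = 2 * Real.pi / 3 := by
  have hsum : γ + β = π := by linarith [hq.angle_sum_eq_two_pi]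
  have hlt : ∠ A B C < ∠ D A B := hA ▸ hB ▸ hgb
  have hS := hq.angleSet_eq_of_ncard_le_three hlt hcount
  obtain ⟨hb, hc, hd⟩ := hq.diagonal_angles_eq (hB.trans hD.symm) hlt hS
  have hhalf : ∠ A B D = β / 2 := by linarith [hq.angle_add_angle_eq]
  obtain ⟨-, hABC, -, -, hDAB⟩ := hq
  obtain ⟨hAB, hBC, hCD⟩ :=
    rhombus_of_diagonal_angles_eq (not_collinear_rotate hDAB) hb.symm hc.symm hd.symm
  have hBCA : ∠ B C A = γ / 2 := by
    rw [angle_eq_pi_sub_div_two_of_dist_eq (by rwa [dist_comm]) (ne₁₂_of_not_collinear hABC), hB]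
    linarith
  have hγβ : γ / 2 = β := by
    have hmem := angle_mem_angleSet (S := {A, B, C, D}) (not_collinear_rotate hABC)
    rw [hS, hBCA, hA, hB, hhalf] at hmem
    rcases hmem with h | h | h
    · linarith [hA ▸ angle_pos_of_not_collinear hDAB]
    · exact h
    · linarith [Set.mem_singleton_iff.1 h]
  exact ⟨hAB, hBC, hCD, by linarith, by linarith⟩
end
end

section
/- Let A, B, C, D ∈ ℝ² with D in the open interior of triangle ABC, and suppose the four points determine at most three distinct angle values in (0,π). Then triangle ABC is equilateral and D is its center (circumcenter = centroid). -/
open EuclideanGeometry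

noncomputable section

/-!
Let `D` lie inside the triangle `ABC`. At the vertex `A` the segment `AD` splits `∠BAC` into two
positive parts, and `∠BAC < ∠BDC` because the base angles of `BDC` are parts of those of `ABC`.
So `∠BAD < ∠BAC < ∠BDC` is a strictly increasing triple of angle values, and so is its analogue at
every vertex and for either neighbour of it. When only three values occur, all these triples
coincide. Comparing the triples at `A` and `B`, and at `B` and `C`, gives equal base angles in the
triangles `ABC`, `ABD` and `BCD`, hence `AB = BC = CA` and `DA = DB = DC`. The only point
equidistant from the vertices is the circumcentre, which for an equilateral triangle is the
centroid.
-/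

section StrictChain

variable {α : Type*} [LinearOrder α]

structure StrictChain₃ (s : Set α) (x y z : α) : Prop where
  left_mem : x ∈ s
  mid_mem : y ∈ s
  right_mem : z ∈ s
  left_lt_mid : x < y
  mid_lt_right : y < z

theorem StrictChain₃.eq_of_encard_le_three {s : Set α} (hs : s.encard ≤ 3) {x y z x' y' z' : α}
    (h : StrictChain₃ s x y z) (h' : StrictChain₃ s x' y' z') : x = x' ∧ y = y' ∧ z = z' := by
  obtain ⟨hx, hy, hz, hxy, hyz⟩ := h
  have hs3 : {x, y, z} = s := by
    refine (Set.toFinite _).eq_of_subset_of_encard_le (by simp [Set.insert_subset_iff, *]) ?_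
    rwa [Set.encard_eq_three.2 ⟨x, y, z, hxy.ne, (hxy.trans hyz).ne, hyz.ne, rfl⟩]
  obtain ⟨hx', hy', hz', hxy', hyz'⟩ := h'
  simp only [← hs3, Set.mem_insert_iff, Set.mem_singleton_iff] at hx' hy' hz'
  rcases hx' with rfl | rfl | rfl <;> rcases hy' with rfl | rfl | rfl <;>
    rcases hz' with rfl | rfl | rfl <;> first | exact ⟨rfl, rfl, rfl⟩ | order

end StrictChain

section Module

variable {k V : Type*} [Field k] [AddCommGroup V] [Module k V] {A B C D : V} {a b c : k}

theorem not_collinear_of_eq_smul_add_smul_add_smul (hT : ¬Collinear k {A, B, C})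
    (habc : a + b + c = 1) (ha : a ≠ 0) (hD : D = a • A + b • B + c • C) :
    ¬Collinear k {B, D, C} := by
  rw [collinear_iff_of_mem (p₀ := B) (by simp)] at hT ⊢
  rintro ⟨v, hv⟩
  obtain ⟨r, hr⟩ := hv D (by simp)
  obtain ⟨s, hs⟩ := hv C (by simp)
  rw [vadd_eq_add] at hr hs
  refine hT ⟨v, ?_⟩
  simp only [Set.mem_insert_iff, Set.mem_singleton_iff, forall_eq_or_imp, forall_eq, vadd_eq_add]
  refine ⟨⟨a⁻¹ * (r - c * s), smul_right_injective V ha ?_⟩, ⟨0, by simp⟩, ⟨s, hs⟩⟩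
  obtain rfl : a = 1 - b - c := by linear_combination habc
  dsimp only
  rw [smul_add, smul_smul, ← mul_assoc, mul_inv_cancel₀ ha, one_mul]
  linear_combination (norm := module) hr - hD - c • hs

end Module

theorem exists_pos_weights_of_mem_interior_convexHull {E : Type*} [NormedAddCommGroup E]
    [NormedSpace ℝ E] (hE : Module.finrank ℝ E = 2) {A B C D : E}
    (hT : AffineIndependent ℝ ![A, B, C]) (hD : D ∈ interior (convexHull ℝ {A, B, C})) :
    ∃ a b c : ℝ, 0 < a ∧ 0 < b ∧ 0 < c ∧ a + b + c = 1 ∧ D = a • A + b • B + c • C := by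
  have : FiniteDimensional ℝ E := Module.finite_of_finrank_eq_succ hE
  let T : AffineBasis (Fin 3) ℝ E :=
    ⟨![A, B, C], hT, hT.affineSpan_eq_top_iff_card_eq_finrank_add_one.2 (by simp [hE])⟩
  have hrange : Set.range T = {A, B, C} := by
    change Set.range ![A, B, C] = _
    rw [Matrix.range_cons, Matrix.range_cons_cons_empty, Set.singleton_union]
  rw [← hrange, T.interior_convexHull] at hD
  refine ⟨T.coord 0 D, T.coord 1 D, T.coord 2 D, hD 0, hD 1, hD 2, ?_, ?_⟩
  · exact (Fin.sum_univ_three _).symm.trans (T.sum_coord_apply_eq_one D)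
  · exact (T.linear_combination_coord_eq_self D).symm.trans (Fin.sum_univ_three _)

section InnerProductSpace

variable {V : Type*} [NormedAddCommGroup V] [InnerProductSpace ℝ V] {A B C D : V} {a b c : ℝ}

theorem angle_add_angle_eq_of_eq_smul_add_smul_add_smul (hb : 0 ≤ b) (hc : 0 ≤ c)
    (habc : a + b + c = 1) (hD : D = a • A + b • B + c • C) (hDA : D ≠ A) :
    ∠ B A D + ∠ D A C = ∠ B A C := by
  obtain rfl : a = 1 - b - c := by linear_combination habc
  refine (InnerProductGeometry.angle_eq_angle_add_add_angle_add_of_mem_span (vsub_ne_zero.2 hDA)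
    (Submodule.mem_span_pair.2 ⟨b.toNNReal, c.toNNReal, ?_⟩)).symm
  simp only [NNReal.smul_def, Real.coe_toNNReal _ hb, Real.coe_toNNReal _ hc, vsub_eq_sub, hD]
  module

theorem angle_lt_angle_of_eq_smul_add_smul_add_smul (hT : ¬Collinear ℝ {A, B, C}) (hb : 0 < b)
    (hc : 0 ≤ c) (habc : a + b + c = 1) (hD : D = a • A + b • B + c • C) :
    ∠ B A D < ∠ B A C := by
  have hDAC : ¬Collinear ℝ {D, A, C} := by
    rw [Set.insert_comm]
    exact not_collinear_of_eq_smul_add_smul_add_smul (A := B) (B := A) (a := b) (b := a) (c := c)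
      (by rwa [Set.insert_comm]) (by linear_combination habc) hb.ne' (by rw [hD]; abel)
  have hsplit := angle_add_angle_eq_of_eq_smul_add_smul_add_smul hb.le hc habc hD
    (ne₁₂_of_not_collinear hDAC)
  linarith [angle_pos_of_not_collinear hDAC]

-- Euclid, *Elements* I.21.
theorem angle_lt_angle_opposite_of_eq_smul_add_smul_add_smul (hT : ¬Collinear ℝ {A, B, C})
    (ha : 0 < a) (hb : 0 ≤ b) (hc : 0 < c) (habc : a + b + c = 1)
    (hD : D = a • A + b • B + c • C) : ∠ B A C < ∠ B D C := by
  have hBDC := not_collinear_of_eq_smul_add_smul_add_smul hT habc ha.ne' hD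
  have hADB : ¬Collinear ℝ {A, B, D} := by
    rw [Set.pair_comm]
    exact not_collinear_of_eq_smul_add_smul_add_smul (A := C) (B := A) (C := B) (a := c) (b := a)
      (c := b) (by rwa [Set.insert_comm C A, Set.pair_comm C B]) (by linear_combination habc)
      hc.ne' (by rw [hD]; abel)
  have hsplitB := angle_add_angle_eq_of_eq_smul_add_smul_add_smul (A := B) (B := C) (C := A)
    (a := b) (b := c) (c := a) hc.le ha.le (by linear_combination habc) (by rw [hD]; abel)
    (ne₁₂_of_not_collinear hBDC).symm
  have hsplitC := angle_add_angle_eq_of_eq_smul_add_smul_add_smul (A := C) (B := B) (C := A)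
    (a := c) (b := b) (c := a) hb ha.le (by linear_combination habc) (by rw [hD]; abel)
    (ne₂₃_of_not_collinear hBDC)
  have hsumABC := angle_add_angle_add_angle_eq_pi (p₁ := B) A (ne₂₃_of_not_collinear hT).symm
  have hsumDBC := angle_add_angle_add_angle_eq_pi D (ne₁₃_of_not_collinear hBDC).symm
  linarith [angle_pos_of_not_collinear hADB, angle_nonneg D C A, angle_comm A B C,
    angle_comm A B D, angle_comm C A B, angle_comm C D B, angle_comm D B C]

theorem nine_mul_dist_centroid_sq (A B C : V) :
    9 * dist ((3 : ℝ)⁻¹ • (A + B + C)) A ^ 2 =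
      2 * dist A B ^ 2 + 2 * dist A C ^ 2 - dist B C ^ 2 := by
  have hG : (3 : ℝ)⁻¹ • (A + B + C) - A = (3 : ℝ)⁻¹ • ((B - A) + (C - A)) := by module
  have hBC : B - C = (B - A) - (C - A) := by abel
  rw [dist_eq_norm, dist_eq_norm', dist_eq_norm', dist_eq_norm, hG, hBC, norm_smul, mul_pow,
    norm_add_sq_real (B - A), norm_sub_sq_real (B - A)]
  norm_num
  ring

theorem dist_centroid_eq_of_dist_eq (h₁ : dist A B = dist B C) (h₂ : dist B C = dist C A) :
    dist ((3 : ℝ)⁻¹ • (A + B + C)) A = dist ((3 : ℝ)⁻¹ • (A + B + C)) B ∧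
      dist ((3 : ℝ)⁻¹ • (A + B + C)) B = dist ((3 : ℝ)⁻¹ • (A + B + C)) C := by
  have hA := nine_mul_dist_centroid_sq A B C
  have hB := nine_mul_dist_centroid_sq B C A
  have hC := nine_mul_dist_centroid_sq C A B
  rw [show B + C + A = A + B + C by abel, dist_comm B A] at hB
  rw [show C + A + B = A + B + C by abel, dist_comm C B] at hC
  rw [dist_comm A C] at hA
  simp only [h₁, h₂] at hA hB hC
  constructor <;> refine (sq_eq_sq₀ dist_nonneg dist_nonneg).1 ?_ <;> linarith

theorem eq_of_dist_eq_of_dist_eq (hV : Module.finrank ℝ V = 2) {P Q : V}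
    (hT : AffineIndependent ℝ ![A, B, C]) (hP₁ : dist P A = dist P B) (hP₂ : dist P B = dist P C)
    (hQ₁ : dist Q A = dist Q B) (hQ₂ : dist Q B = dist Q C) : P = Q := by
  have : FiniteDimensional ℝ V := Module.finite_of_finrank_eq_succ hV
  let T : Affine.Simplex ℝ V 2 := ⟨![A, B, C], hT⟩
  have hspan : affineSpan ℝ (Set.range T.points) = ⊤ :=
    hT.affineSpan_eq_top_iff_card_eq_finrank_add_one.2 (by simp [hV])
  have hcirc (X : V) (h₁ : dist X A = dist X B) (h₂ : dist X B = dist X C) :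
      X = T.circumcenter :=
    T.eq_circumcenter_of_dist_eq (hspan ▸ AffineSubspace.mem_top ℝ V X) (r := dist X A)
      fun i => by fin_cases i <;> simp [T, dist_comm _ X, h₁, h₂]
  exact (hcirc P hP₁ hP₂).trans (hcirc Q hQ₁ hQ₂).symm

end InnerProductSpace

theorem angleSet_finite_s8 {P : Set Pt} (hP : P.Finite) : (angleSet P).Finite := by
  refine ((hP.prod (hP.prod hP)).image fun p => ∠ p.1 p.2.1 p.2.2).subset ?_
  rintro _ ⟨-, x, hx, y, hy, z, hz, -, -, -, rfl⟩
  exact ⟨(x, y, z), ⟨hx, hy, hz⟩, rfl⟩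

theorem angle_mem_angleSet_s8 {P : Set Pt} {x y z : Pt} (hx : x ∈ P) (hy : y ∈ P) (hz : z ∈ P)
    (h : ¬Collinear ℝ {x, y, z}) : ∠ x y z ∈ angleSet P :=
  ⟨⟨angle_pos_of_not_collinear h, angle_lt_pi_of_not_collinear h⟩, x, hx, y, hy, z, hz,
    ne₁₂_of_not_collinear h, ne₂₃_of_not_collinear h, ne₁₃_of_not_collinear h, rfl⟩

theorem strictChain₃_angleSet {P : Set Pt} {A B C D : Pt} (hT : ¬Collinear ℝ {A, B, C})
    (hD : D ∈ interior (convexHull ℝ {A, B, C})) (hP : {A, B, C} ⊆ P) (hDP : D ∈ P) :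
    StrictChain₃ (angleSet P) (∠ B A D) (∠ B A C) (∠ B D C) := by
  obtain ⟨a, b, c, ha, hb, hc, habc, hDw⟩ := exists_pos_weights_of_mem_interior_convexHull
    finrank_euclideanSpace_fin (affineIndependent_iff_not_collinear_set.2 hT) hD
  have hA : A ∈ P := hP (by simp)
  have hB : B ∈ P := hP (by simp)
  have hC : C ∈ P := hP (by simp)
  have hBAD : ¬Collinear ℝ {B, A, D} := by
    rw [Set.pair_comm]
    exact not_collinear_of_eq_smul_add_smul_add_smul (A := C) (B := B) (C := A) (a := c) (b := b)
      (c := a) (by rwa [Set.pair_comm, Set.insert_comm, Set.pair_comm])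
      (by linear_combination habc) hc.ne' (by rw [hDw]; abel)
  exact ⟨angle_mem_angleSet_s8 hB hA hDP hBAD,
    angle_mem_angleSet_s8 hB hA hC (by rwa [Set.insert_comm]),
    angle_mem_angleSet_s8 hB hDP hC (not_collinear_of_eq_smul_add_smul_add_smul hT habc ha.ne' hDw),
    angle_lt_angle_of_eq_smul_add_smul_add_smul hT hb hc.le habc hDw,
    angle_lt_angle_opposite_of_eq_smul_add_smul_add_smul hT ha hb.le hc habc hDw⟩

theorem stmt8 (A B C D : Pt) (h : AffineIndependent ℝ ![A, B, C])
    (hD : D ∈ interior (convexHull ℝ ({A, B, C} : Set Pt)))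
    (hcount : (angleSet {A, B, C, D}).ncard ≤ 3) :
    dist A B = dist B C ∧ dist B C = dist C A ∧ D = (3 : ℝ)⁻¹ • (A + B + C) := by
  have hT : ¬Collinear ℝ {A, B, C} := affineIndependent_iff_not_collinear_set.1 h
  have hS : (angleSet {A, B, C, D}).encard ≤ 3 := by
    rw [← (angleSet_finite_s8 (Set.toFinite _)).cast_ncard_eq]
    exact_mod_cast hcount
  have chain {X Y Z : Pt} (hXYZ : ({X, Y, Z} : Set Pt) = {A, B, C}) :
      StrictChain₃ (angleSet {A, B, C, D}) (∠ Y X D) (∠ Y X Z) (∠ Y D Z) :=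
    strictChain₃_angleSet (hXYZ ▸ hT) (hXYZ ▸ hD) (hXYZ ▸ by simp [Set.insert_subset_iff])
      (by simp)
  have hBCA : ({B, C, A} : Set Pt) = {A, B, C} := by rw [Set.pair_comm, Set.insert_comm]
  have hCBA : ({C, B, A} : Set Pt) = {A, B, C} := by
    rw [Set.pair_comm, Set.insert_comm, Set.pair_comm]
  have hne_pi {θ : ℝ} (hθ : θ ∈ angleSet {A, B, C, D}) : θ ≠ Real.pi := hθ.1.2.ne
  obtain ⟨hDAB, hCAB, -⟩ := (chain rfl).eq_of_encard_le_three hS (chain (Set.insert_comm B A {C}))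
  obtain ⟨hDBC, hABC, -⟩ := (chain hBCA).eq_of_encard_le_three hS (chain hCBA)
  have hCA : dist C A = dist C B := dist_eq_of_angle_eq_angle_of_angle_ne_pi
    (by rw [angle_comm, hCAB, angle_comm]) (by rw [angle_comm]; exact hne_pi (chain hCBA).mid_mem)
  have hAB : dist A B = dist A C := dist_eq_of_angle_eq_angle_of_angle_ne_pi
    (by rw [angle_comm, hABC, angle_comm]) (hne_pi (chain rfl).mid_mem)
  have hDA : dist D A = dist D B := dist_eq_of_angle_eq_angle_of_angle_ne_pi
    (by rw [angle_comm, hDAB, angle_comm]) (by rw [angle_comm]; exact hne_pi (chain hCBA).right_mem)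
  have hDB : dist D B = dist D C := dist_eq_of_angle_eq_angle_of_angle_ne_pi
    (by rw [angle_comm, hDBC, angle_comm]) (hne_pi (chain rfl).right_mem)
  have e₁ : dist A B = dist B C := by rw [hAB, dist_comm A C, hCA, dist_comm C B]
  have e₂ : dist B C = dist C A := by rw [dist_comm B C, hCA]
  obtain ⟨hGA, hGB⟩ := dist_centroid_eq_of_dist_eq e₁ e₂
  exact ⟨e₁, e₂, eq_of_dist_eq_of_dist_eq finrank_euclideanSpace_fin h hDA hDB hGA hGB⟩
end
end

section
/- The five-point set consisting of the four vertices of a square together with its center determines exactly two distinct angle values in (0,π), namely π/4 and π/2. -/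
/-!
The cosine of `∠ x y z` is `p / √q` with `p = ⟪x - y, z - y⟫` and `q = ‖x - y‖² ‖z - y‖²`.
For every triple of distinct points of the configuration, either `q = p²`, or `q = 2 p²` with
`p > 0`, or `p = 0`; so the cosine is `±1`, `√2 / 2` or `0`. The values `±1` (collinear triples)
give the excluded angles `0` and `π`, the other two give `π / 4` and `π / 2`, both attained at the
corner `(0, 0)`.
-/

open EuclideanGeometry

noncomputable section

lemma pt_inj {a b c d : ℝ} : pt a b = pt c d ↔ a = c ∧ b = d := by
  refine ⟨fun h => ⟨congrArg (· 0) h, congrArg (· 1) h⟩, ?_⟩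
  rintro ⟨rfl, rfl⟩
  rfl

lemma angle_pt (a b c d e f : ℝ) :
    ∠ (pt a b) (pt c d) (pt e f) =
      Real.arccos (((a - c) * (e - c) + (b - d) * (f - d)) /
        √(((a - c) ^ 2 + (b - d) ^ 2) * ((e - c) ^ 2 + (f - d) ^ 2))) := by
  rw [EuclideanGeometry.angle, InnerProductGeometry.angle, Real.sqrt_mul (by positivity)]
  congr 1
  simp [pt, PiLp.inner_apply, EuclideanSpace.norm_eq, Fin.sum_univ_two]
  ring

namespace Real

lemma arccos_div_sqrt_eq_zero {p q : ℝ} (hp : 0 < p) (hq : q = p ^ 2) :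
    arccos (p / √q) = 0 := by
  rw [hq, sqrt_sq hp.le, div_self hp.ne', arccos_one]

lemma arccos_div_sqrt_eq_pi {p q : ℝ} (hp : p < 0) (hq : q = p ^ 2) :
    arccos (p / √q) = π := by
  rw [hq, sqrt_sq_eq_abs, abs_of_neg hp, div_neg, div_self hp.ne, arccos_neg_one]

lemma arccos_div_sqrt_eq_pi_div_four {p q : ℝ} (hp : 0 < p) (hq : q = 2 * p ^ 2) :
    arccos (p / √q) = π / 4 := by
  have hcos : p / √q = √2 / 2 := by
    rw [hq, sqrt_mul zero_le_two, sqrt_sq hp.le, div_eq_div_iff (by positivity) two_ne_zero]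
    nlinarith [sq_sqrt (zero_le_two : (0 : ℝ) ≤ 2)]
  rw [hcos, ← cos_pi_div_four, arccos_cos (by positivity) (by linarith [pi_pos])]

lemma arccos_div_sqrt_eq_pi_div_two {p q : ℝ} (hp : p = 0) : arccos (p / √q) = π / 2 := by
  rw [hp, zero_div, arccos_zero]

lemma arccos_div_sqrt_mem_of_cases {p q : ℝ}
    (h : 0 < p ∧ q = p ^ 2 ∨ 0 < p ∧ q = 2 * p ^ 2 ∨ p = 0 ∨ p < 0 ∧ q = p ^ 2) :
    arccos (p / √q) ∈ ({0, π / 4, π / 2, π} : Set ℝ) := by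
  rcases h with ⟨hp, hq⟩ | ⟨hp, hq⟩ | hp | ⟨hp, hq⟩
  · exact Or.inl (arccos_div_sqrt_eq_zero hp hq)
  · exact Or.inr (Or.inl (arccos_div_sqrt_eq_pi_div_four hp hq))
  · exact Or.inr (Or.inr (Or.inl (arccos_div_sqrt_eq_pi_div_two hp)))
  · exact Or.inr (Or.inr (Or.inr (arccos_div_sqrt_eq_pi hp hq)))

end Real

def squareWithCenter : Set Pt := {pt 0 0, pt 1 0, pt 1 1, pt 0 1, pt (1/2) (1/2)}

lemma angle_squareWithCenter {x y z : Pt} (hx : x ∈ squareWithCenter) (hy : y ∈ squareWithCenter)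
    (hz : z ∈ squareWithCenter) (hxy : x ≠ y) (hyz : y ≠ z) :
    ∠ x y z ∈ ({0, Real.pi / 4, Real.pi / 2, Real.pi} : Set ℝ) := by
  simp only [squareWithCenter, Set.mem_insert_iff, Set.mem_singleton_iff] at hx hy hz
  rcases hx with rfl | rfl | rfl | rfl | rfl <;> rcases hy with rfl | rfl | rfl | rfl | rfl <;>
    rcases hz with rfl | rfl | rfl | rfl | rfl <;>
    first
    | exact absurd rfl hxy
    | exact absurd rfl hyz
    | exact angle_pt _ _ _ _ _ _ ▸ Real.arccos_div_sqrt_mem_of_cases (by norm_num)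

theorem stmt11 :
    angleSet {pt 0 0, pt 1 0, pt 1 1, pt 0 1, pt (1/2) (1/2)} =
      {Real.pi / 4, Real.pi / 2} := by
  have hpi := Real.pi_pos
  ext θ
  constructor
  · rintro ⟨⟨hθ₀, hθπ⟩, x, hx, y, hy, z, hz, hxy, hyz, -, rfl⟩
    rcases angle_squareWithCenter hx hy hz hxy hyz with h | h | h | (h : _ = _)
    · linarith
    · exact Or.inl h
    · exact Or.inr h
    · linarith
  · rintro (rfl | rfl)
    · refine ⟨⟨by positivity, by linarith⟩, pt 1 0, by simp, pt 0 0, by simp, pt 1 1, by simp,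
        by norm_num [pt_inj], by norm_num [pt_inj], by norm_num [pt_inj], ?_⟩
      rw [angle_pt]
      exact Real.arccos_div_sqrt_eq_pi_div_four (by norm_num) (by norm_num)
    · refine ⟨⟨by positivity, by linarith⟩, pt 1 0, by simp, pt 0 0, by simp, pt 0 1, by simp,
        by norm_num [pt_inj], by norm_num [pt_inj], by norm_num [pt_inj], ?_⟩
      rw [angle_pt]
      exact Real.arccos_div_sqrt_eq_pi_div_two (by norm_num)
end
end
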